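/- Let H be a Hopf algebra with bijective antipode and φ: P → P' a morphism of unital right H-comodule algebras. If l: H → P⊗P is a strong connection for P (unital, satisfying (l⊗id)Δ = (id⊗δ)l, (id⊗l)Δ = (δ_L⊗id)l, and χ̃∘l = 1⊗id where χ̃(p⊗p') = pp'₍₀₎⊗p'₍₁₎ and δ_L(p) = S⁻¹(p₍₁₎)⊗p₍₀₎), then l' := (φ⊗φ)∘l is a strong connection for P'. -/
import Mathlib


open TensorProduct

/-- The lifted canonical map χ̃ : P ⊗ P → P ⊗ H, p ⊗ p' ↦ p p'₍₀₎ ⊗ p'₍₁₎. -/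
noncomputable def chiTilde (k P H : Type*) [CommRing k] [Ring P] [Algebra k P]
    [Ring H] [Algebra k H] (δ : P →ₗ[k] P ⊗[k] H) :
    P ⊗[k] P →ₗ[k] P ⊗[k] H :=
  TensorProduct.map (LinearMap.mul' k P) LinearMap.id
    ∘ₗ (TensorProduct.assoc k P P H).symm.toLinearMap
    ∘ₗ TensorProduct.map LinearMap.id δ

/-- The induced left coaction δ_L : P → H ⊗ P, p ↦ S⁻¹(p₍₁₎) ⊗ p₍₀₎. -/
noncomputable def deltaL (k P H : Type*) [CommRing k] [Ring P] [Algebra k P]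
    [Ring H] [Algebra k H] (δ : P →ₗ[k] P ⊗[k] H) (Sinv : H →ₗ[k] H) :
    P →ₗ[k] H ⊗[k] P :=
  TensorProduct.map Sinv LinearMap.id ∘ₗ (TensorProduct.comm k P H).toLinearMap ∘ₗ δ

/-- The strong connection conditions for a unital linear map l : H → P ⊗ P:
unitality, the two colinearity conditions (i) (l⊗id)Δ = (id⊗δ)l and
(ii) (id⊗l)Δ = (δ_L⊗id)l, and (iii) χ̃∘l = 1⊗id. -/
noncomputable def IsStrongConnection (k P H : Type*) [CommRing k] [Ring P] [Algebra k P]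
    [Ring H] [HopfAlgebra k H] (Sinv : H →ₗ[k] H)
    (δ : P →ₗ[k] P ⊗[k] H) (l : H →ₗ[k] P ⊗[k] P) : Prop :=
  l 1 = (1 : P) ⊗ₜ[k] (1 : P) ∧
  (TensorProduct.assoc k P P H).toLinearMap ∘ₗ TensorProduct.map l LinearMap.id
      ∘ₗ Coalgebra.comul
    = TensorProduct.map LinearMap.id δ ∘ₗ l ∧
  TensorProduct.map LinearMap.id l ∘ₗ Coalgebra.comul
    = (TensorProduct.assoc k H P P).toLinearMap
        ∘ₗ TensorProduct.map (deltaL k P H δ Sinv) LinearMap.id ∘ₗ l ∧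
  chiTilde k P H δ ∘ₗ l = TensorProduct.mk k P H 1

/-- if φ : P → P' is a morphism of unital right H-comodule algebras (H a
Hopf algebra with bijective antipode) and l is a strong connection for P, then
l' := (φ⊗φ)∘l is a strong connection for P'. -/
theorem stmt10 (k : Type*) [CommRing k] (H : Type*) [Ring H] [HopfAlgebra k H]
    (Sinv : H →ₗ[k] H)
    (hS1 : ∀ h, Sinv (HopfAlgebra.antipode (R := k) h) = h)
    (hS2 : ∀ h, HopfAlgebra.antipode (R := k) (Sinv h) = h)
    (P P' : Type*) [Ring P] [Algebra k P] [Ring P'] [Algebra k P']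
    (δ : P →ₐ[k] P ⊗[k] H) (δ' : P' →ₐ[k] P' ⊗[k] H)
    -- δ and δ' are coassociative counital coactions
    (hco : (TensorProduct.assoc k P H H).toLinearMap
        ∘ₗ TensorProduct.map δ.toLinearMap LinearMap.id ∘ₗ δ.toLinearMap
      = TensorProduct.map LinearMap.id Coalgebra.comul ∘ₗ δ.toLinearMap)
    (hcounit : (TensorProduct.rid k P).toLinearMap
        ∘ₗ TensorProduct.map LinearMap.id Coalgebra.counit ∘ₗ δ.toLinearMap
      = LinearMap.id)
    (hco' : (TensorProduct.assoc k P' H H).toLinearMap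
        ∘ₗ TensorProduct.map δ'.toLinearMap LinearMap.id ∘ₗ δ'.toLinearMap
      = TensorProduct.map LinearMap.id Coalgebra.comul ∘ₗ δ'.toLinearMap)
    (hcounit' : (TensorProduct.rid k P').toLinearMap
        ∘ₗ TensorProduct.map LinearMap.id Coalgebra.counit ∘ₗ δ'.toLinearMap
      = LinearMap.id)
    -- φ is an H-comodule algebra morphism
    (φ : P →ₐ[k] P')
    (hφ : ∀ p, TensorProduct.map φ.toLinearMap LinearMap.id (δ p) = δ' (φ p))
    (l : H →ₗ[k] P ⊗[k] P)
    (hl : IsStrongConnection k P H Sinv δ.toLinearMap l) :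
    IsStrongConnection k P' H Sinv δ'.toLinearMap
      (TensorProduct.map φ.toLinearMap φ.toLinearMap ∘ₗ l) := by
  obtain ⟨h1, h2, h3, h4⟩ := hl
  have hA : TensorProduct.map φ.toLinearMap LinearMap.id ∘ₗ δ.toLinearMap
      = δ'.toLinearMap ∘ₗ φ.toLinearMap := by
    ext p; exact hφ p
  have hB : chiTilde k P' H δ'.toLinearMap
        ∘ₗ TensorProduct.map φ.toLinearMap φ.toLinearMap
      = TensorProduct.map φ.toLinearMap LinearMap.id ∘ₗ chiTilde k P H δ.toLinearMap := by
    have key : ∀ (p : P) (x : P ⊗[k] H),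
        TensorProduct.map (LinearMap.mul' k P') LinearMap.id
          ((TensorProduct.assoc k P' P' H).symm
            ((φ p) ⊗ₜ[k] TensorProduct.map φ.toLinearMap LinearMap.id x))
        = TensorProduct.map φ.toLinearMap LinearMap.id
            (TensorProduct.map (LinearMap.mul' k P) LinearMap.id
              ((TensorProduct.assoc k P P H).symm (p ⊗ₜ[k] x))) := by
      intro p x
      induction x using TensorProduct.induction_on with
      | zero =>
        simp only [LinearMap.map_zero, TensorProduct.tmul_zero, LinearEquiv.map_zero]
      | tmul a h => simp [LinearMap.mul'_apply]
      | add x y hx hy =>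
        simp only [map_add, TensorProduct.tmul_add] at *
        simp [hx, hy]
    unfold chiTilde
    apply TensorProduct.ext'
    intro p p'
    simp only [LinearMap.comp_apply, TensorProduct.map_tmul, LinearMap.id_apply,
      AlgHom.toLinearMap_apply]
    rw [← hφ p']
    exact key p (δ p')
  have hC : deltaL k P' H δ'.toLinearMap Sinv ∘ₗ φ.toLinearMap
      = TensorProduct.map LinearMap.id φ.toLinearMap ∘ₗ deltaL k P H δ.toLinearMap Sinv := by
    have key : ∀ (x : P ⊗[k] H),
        TensorProduct.map Sinv LinearMap.id
          ((TensorProduct.comm k P' H) (TensorProduct.map φ.toLinearMap LinearMap.id x))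
        = TensorProduct.map LinearMap.id φ.toLinearMap
            (TensorProduct.map Sinv LinearMap.id ((TensorProduct.comm k P H) x)) := by
      intro x
      induction x using TensorProduct.induction_on with
      | zero => simp
      | tmul a h => simp
      | add x y hx hy => simp only [map_add] at *; simp [hx, hy]
    apply LinearMap.ext
    intro p
    simp only [deltaL, LinearMap.comp_apply, AlgHom.toLinearMap_apply]
    rw [← hφ p]
    exact key (δ p)
  refine ⟨?_, ?_, ?_, ?_⟩
  · simp [h1]
  · calc (TensorProduct.assoc k P' P' H).toLinearMap
          ∘ₗ TensorProduct.map (TensorProduct.map φ.toLinearMap φ.toLinearMap ∘ₗ l) LinearMap.id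
          ∘ₗ Coalgebra.comul
        = (TensorProduct.assoc k P' P' H).toLinearMap
            ∘ₗ TensorProduct.map (TensorProduct.map φ.toLinearMap φ.toLinearMap) LinearMap.id
            ∘ₗ TensorProduct.map l LinearMap.id ∘ₗ Coalgebra.comul := by
          symm
          rw [← LinearMap.comp_assoc Coalgebra.comul (TensorProduct.map l LinearMap.id),
            ← TensorProduct.map_comp, LinearMap.comp_id]
      _ = TensorProduct.map φ.toLinearMap (TensorProduct.map φ.toLinearMap LinearMap.id)
            ∘ₗ (TensorProduct.assoc k P P H).toLinearMap
            ∘ₗ TensorProduct.map l LinearMap.id ∘ₗ Coalgebra.comul := by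
          rw [← LinearMap.comp_assoc, ← LinearMap.comp_assoc,
            ← TensorProduct.map_map_comp_assoc_eq]
          simp only [LinearMap.comp_assoc]
      _ = TensorProduct.map φ.toLinearMap (TensorProduct.map φ.toLinearMap LinearMap.id)
            ∘ₗ TensorProduct.map LinearMap.id δ.toLinearMap ∘ₗ l := by
          rw [← h2]
      _ = TensorProduct.map LinearMap.id δ'.toLinearMap
            ∘ₗ TensorProduct.map φ.toLinearMap φ.toLinearMap ∘ₗ l := by
          rw [← LinearMap.comp_assoc, ← LinearMap.comp_assoc, ← TensorProduct.map_comp,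
            ← TensorProduct.map_comp, LinearMap.comp_id, LinearMap.id_comp, hA]
  · calc TensorProduct.map LinearMap.id (TensorProduct.map φ.toLinearMap φ.toLinearMap ∘ₗ l)
          ∘ₗ Coalgebra.comul
        = TensorProduct.map LinearMap.id (TensorProduct.map φ.toLinearMap φ.toLinearMap)
            ∘ₗ TensorProduct.map LinearMap.id l ∘ₗ Coalgebra.comul := by
          symm
          rw [← LinearMap.comp_assoc Coalgebra.comul (TensorProduct.map LinearMap.id l),
            ← TensorProduct.map_comp, LinearMap.comp_id]
      _ = TensorProduct.map LinearMap.id (TensorProduct.map φ.toLinearMap φ.toLinearMap)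
            ∘ₗ (TensorProduct.assoc k H P P).toLinearMap
            ∘ₗ TensorProduct.map (deltaL k P H δ.toLinearMap Sinv) LinearMap.id ∘ₗ l := by
          rw [h3]
      _ = (TensorProduct.assoc k H P' P').toLinearMap
            ∘ₗ TensorProduct.map (TensorProduct.map LinearMap.id φ.toLinearMap) φ.toLinearMap
            ∘ₗ TensorProduct.map (deltaL k P H δ.toLinearMap Sinv) LinearMap.id ∘ₗ l := by
          rw [← LinearMap.comp_assoc, ← LinearMap.comp_assoc,
            TensorProduct.map_map_comp_assoc_eq]
          simp only [LinearMap.comp_assoc]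
      _ = (TensorProduct.assoc k H P' P').toLinearMap
            ∘ₗ TensorProduct.map (deltaL k P' H δ'.toLinearMap Sinv) LinearMap.id
            ∘ₗ TensorProduct.map φ.toLinearMap φ.toLinearMap ∘ₗ l := by
          congr 1
          rw [← LinearMap.comp_assoc, ← LinearMap.comp_assoc, ← TensorProduct.map_comp,
            ← TensorProduct.map_comp, ← hC, LinearMap.comp_id, LinearMap.id_comp]
  · rw [← LinearMap.comp_assoc, hB, LinearMap.comp_assoc, h4]
    ext h
    simp
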